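/- arXiv:math-ph/0202038 — 4 statements merged into one kernel-verified Lean document; each statement's English description precedes it below -/
import Mathlib

section
/- Let M be a von Neumann algebra and let ν, ρ be positive linear forms on M. Then sup { |f(1)| : f ∈ Γ_M(ν,ρ) } = inf { (1/2)·Σ_{j=1}^n ( ν(y_j* y_j) + ρ(x_j* x_j) ) : n ∈ ℕ, y_1, x_1, …, y_n, x_n ∈ M with Σ_{j=1}^n y_j* x_j = 1 }. -/
open scoped ComplexOrder

noncomputable section

variable {H : Type*} [NormedAddCommGroup H] [InnerProductSpace ℂ H] [CompleteSpace H]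

/-- A von Neumann algebra is closed under scalar multiplication by complex numbers. -/
instance VonNeumannAlgebra.instSMulMemClass :
    SMulMemClass (VonNeumannAlgebra H) ℂ (H →L[ℂ] H) where
  smul_mem {s} c x hx := s.toStarSubalgebra.smul_mem hx c

private lemma isClosed_centralizer' {A : Type*} [NormedRing A] (s : Set A) :
    IsClosed (Set.centralizer s) := by
  have h : Set.centralizer s = ⋂ a ∈ s, {x : A | a * x = x * a} := by
    ext x; rw [Set.mem_centralizer_iff]; simp
  rw [h]
  exact isClosed_biInter fun a _ =>
    isClosed_eq (continuous_const.mul continuous_id) (continuous_id.mul continuous_const)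

/-- A von Neumann algebra is norm-closed in `B(H)`; consequently the subtype `↥M`
inherits a C*-algebra structure. -/
instance VonNeumannAlgebra.instIsClosed (M : VonNeumannAlgebra H) :
    IsClosed (M : Set (H →L[ℂ] H)) :=
  M.centralizer_centralizer ▸ isClosed_centralizer' _

variable {M : VonNeumannAlgebra H}

/-- `ν` is a positive linear form on the von Neumann algebra `M`:
a bounded linear functional with `ν(x*x) ≥ 0` for all `x`. -/
def IsPosForm (ν : M →L[ℂ] ℂ) : Prop := ∀ x : M, 0 ≤ ν (star x * x)

/-- The set `Γ_M(ν,ρ) = { f ∈ M* : |f(y*x)|² ≤ ν(y*y)·ρ(x*x) for all x, y ∈ M }`. -/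
def GammaSet (ν ρ : M →L[ℂ] ℂ) : Set (M →L[ℂ] ℂ) :=
  {f | ∀ x y : M, ‖f (star y * x)‖ ^ 2 ≤ (ν (star y * y)).re * (ρ (star x * x)).re}

/-! The set `Γ_M(ν,ρ)` consists exactly of the functionals dominated by the seminorm
`q z = inf ½ Σ_j (ν(y_j* y_j) + ρ(x_j* x_j))`, the infimum taken over the double systems
with `Σ_j y_j* x_j = z`. Domination by `q` follows from
`|f(y*x)| ≤ √(ν(y*y) ρ(x*x)) ≤ ½(ν(y*y) + ρ(x*x))`; conversely, homogeneity of `q` gives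
`2 t q(y*x) ≤ t² ν(y*y) + ρ(x*x)` for every real `t`, and the discriminant of this quadratic
yields the defining inequality of `Γ_M(ν,ρ)`. By Hahn–Banach some functional dominated by `q`
takes the value `q 1` at `1`, and `q 1` is the infimum in question. -/

open scoped Pointwise

theorem Seminorm.exists_dual_norm_le_apply_eq {𝕜 E : Type*} [RCLike 𝕜] [AddCommGroup E]
    [Module 𝕜 E] (p : Seminorm 𝕜 E) (x : E) :
    ∃ g : Module.Dual 𝕜 E, (∀ z, ‖g z‖ ≤ p z) ∧ g x = p x := by
  rcases eq_or_ne x 0 with rfl | hx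
  · exact ⟨0, fun z => by simp, by simp⟩
  have hcoord := LinearEquiv.coord_self 𝕜 E x hx
  obtain ⟨g, hgx, hgp⟩ := Module.Dual.exists_extension_of_le_seminorm (𝕜 ∙ x)
    ((p x : 𝕜) • (LinearEquiv.coord 𝕜 E x hx : Module.Dual 𝕜 (𝕜 ∙ x))) (p := p) <| by
      rintro ⟨z, hz⟩
      obtain ⟨c, rfl⟩ := Submodule.mem_span_singleton.mp hz
      change ‖(p x : 𝕜) • LinearEquiv.coord 𝕜 E x hx
        (c • ⟨x, Submodule.mem_span_singleton_self x⟩)‖ ≤ p (c • x)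
      rw [map_smul, hcoord, map_smul_eq_mul]
      simp [mul_comm, abs_of_nonneg (apply_nonneg p x)]
  refine ⟨g, hgp, ?_⟩
  simpa [hcoord, RCLike.real_smul_eq_coe_mul] using hgx ⟨x, Submodule.mem_span_singleton_self x⟩

section DoubleSystem

variable {A : Type*} [NormedRing A] [StarRing A] [NormedAlgebra ℂ A]

lemma re_apply_star_smul_mul_smul [StarModule ℂ A] (φ : A →L[ℂ] ℂ) (c : ℂ) (x : A) :
    (φ (star (c • x) * (c • x))).re = ‖c‖ ^ 2 * (φ (star x * x)).re := by
  rw [star_smul, smul_mul_smul_comm, map_smul, smul_eq_mul, Complex.star_def, Complex.conj_mul',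
    ← Complex.ofReal_pow, Complex.re_ofReal_mul]

variable (ν ρ : A →L[ℂ] ℂ)

def doubleSystemCosts (z : A) : Set ℝ :=
  {r | ∃ (n : ℕ) (y x : Fin n → A), (∑ j, star (y j) * x j) = z ∧
    r = (1/2) * ∑ j, ((ν (star (y j) * y j)).re + (ρ (star (x j) * x j)).re)}

variable {ν ρ}

lemma pair_mem_doubleSystemCosts (y x : A) :
    (1/2) * ((ν (star y * y)).re + (ρ (star x * x)).re) ∈ doubleSystemCosts ν ρ (star y * x) :=
  ⟨1, fun _ => y, fun _ => x, by simp, by simp⟩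

lemma zero_mem_doubleSystemCosts : (0 : ℝ) ∈ doubleSystemCosts ν ρ 0 :=
  ⟨0, Fin.elim0, Fin.elim0, by simp, by simp⟩

lemma doubleSystemCosts_nonempty (z : A) : (doubleSystemCosts ν ρ z).Nonempty :=
  ⟨_, by simpa using pair_mem_doubleSystemCosts (ν := ν) (ρ := ρ) 1 z⟩

lemma doubleSystemCosts_add_subset (z w : A) :
    doubleSystemCosts ν ρ z + doubleSystemCosts ν ρ w ⊆ doubleSystemCosts ν ρ (z + w) := by
  rintro _ ⟨_, ⟨m, y, x, rfl, rfl⟩, _, ⟨n, y', x', rfl, rfl⟩, rfl⟩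
  refine ⟨m + n, Fin.append y y', Fin.append x x', ?_, ?_⟩ <;>
    simp [Fin.sum_univ_add, mul_add]

lemma doubleSystemCosts_smul_subset [StarModule ℂ A] (c : ℂ) (z : A) :
    ‖c‖ • doubleSystemCosts ν ρ z ⊆ doubleSystemCosts ν ρ (c • z) := by
  rintro _ ⟨_, ⟨n, y, x, rfl, rfl⟩, rfl⟩
  rcases eq_or_ne c 0 with rfl | hc
  · simpa using zero_mem_doubleSystemCosts
  -- `c = s * (c / s)` with `s = √‖c‖` scales both halves of the cost by `‖c‖`
  set s : ℂ := ((√‖c‖ : ℝ) : ℂ)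
  have hs : s ≠ 0 := by simpa [s] using hc
  have hs2 : ‖s‖ ^ 2 = ‖c‖ := by simp [s]
  refine ⟨n, fun j => s • y j, fun j => (c / s) • x j, ?_, ?_⟩
  · simp only [star_smul, smul_mul_smul_comm, Finset.smul_sum, Complex.star_def,
      Complex.conj_ofReal, s, mul_div_cancel₀ c hs]
  · have hc2 : ‖c‖ ^ 2 / ‖c‖ = ‖c‖ := by
      rw [sq, mul_div_cancel_right₀ _ (norm_ne_zero_iff.mpr hc)]
    simp only [re_apply_star_smul_mul_smul, norm_div, div_pow, hs2, hc2, smul_eq_mul,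
      Finset.mul_sum]
    exact Finset.sum_congr rfl fun j _ => by ring

lemma nonneg_of_mem_doubleSystemCosts (hν : ∀ x : A, 0 ≤ (ν (star x * x)).re)
    (hρ : ∀ x : A, 0 ≤ (ρ (star x * x)).re) {z : A} {r : ℝ}
    (hr : r ∈ doubleSystemCosts ν ρ z) : 0 ≤ r := by
  obtain ⟨n, y, x, -, rfl⟩ := hr
  exact mul_nonneg (by norm_num) (Finset.sum_nonneg fun j _ => add_nonneg (hν _) (hρ _))

lemma bddBelow_doubleSystemCosts (hν : ∀ x : A, 0 ≤ (ν (star x * x)).re)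
    (hρ : ∀ x : A, 0 ≤ (ρ (star x * x)).re) (z : A) : BddBelow (doubleSystemCosts ν ρ z) :=
  ⟨0, fun _ => nonneg_of_mem_doubleSystemCosts hν hρ⟩

variable [StarModule ℂ A]

def doubleSystemSeminorm (hν : ∀ x : A, 0 ≤ (ν (star x * x)).re)
    (hρ : ∀ x : A, 0 ≤ (ρ (star x * x)).re) : Seminorm ℂ A :=
  Seminorm.ofSMulLE (fun z => sInf (doubleSystemCosts ν ρ z))
    (le_antisymm (csInf_le (bddBelow_doubleSystemCosts hν hρ 0) zero_mem_doubleSystemCosts)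
      (Real.sInf_nonneg fun _ => nonneg_of_mem_doubleSystemCosts hν hρ))
    (fun z w => (csInf_le_csInf (bddBelow_doubleSystemCosts hν hρ _)
        ((doubleSystemCosts_nonempty z).add (doubleSystemCosts_nonempty w))
        (doubleSystemCosts_add_subset z w)).trans_eq
      (csInf_add (doubleSystemCosts_nonempty z) (bddBelow_doubleSystemCosts hν hρ z)
        (doubleSystemCosts_nonempty w) (bddBelow_doubleSystemCosts hν hρ w)))
    (fun c z => (csInf_le_csInf (bddBelow_doubleSystemCosts hν hρ _)
        ((doubleSystemCosts_nonempty z).smul_set) (doubleSystemCosts_smul_subset c z)).trans_eq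
      (Real.sInf_smul_of_nonneg (norm_nonneg c) _))

section

variable {hν : ∀ x : A, 0 ≤ (ν (star x * x)).re} {hρ : ∀ x : A, 0 ≤ (ρ (star x * x)).re}

lemma doubleSystemSeminorm_le_of_mem {z : A} {r : ℝ} (hr : r ∈ doubleSystemCosts ν ρ z) :
    doubleSystemSeminorm hν hρ z ≤ r :=
  csInf_le (bddBelow_doubleSystemCosts hν hρ z) hr

lemma doubleSystemSeminorm_star_mul_sq_le (y x : A) :
    doubleSystemSeminorm hν hρ (star y * x) ^ 2 ≤
      (ν (star y * y)).re * (ρ (star x * x)).re := by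
  set q := doubleSystemSeminorm hν hρ
  have hq : ∀ t : ℝ,
      2 * t * q (star y * x) ≤ t ^ 2 * (ν (star y * y)).re + (ρ (star x * x)).re := by
    intro t
    have hpair := doubleSystemSeminorm_le_of_mem (hν := hν) (hρ := hρ)
      (pair_mem_doubleSystemCosts ((t : ℂ) • y) x)
    rw [re_apply_star_smul_mul_smul, star_smul, smul_mul_assoc, map_smul_eq_mul] at hpair
    simp only [Complex.star_def, Complex.conj_ofReal, Complex.norm_real, Real.norm_eq_abs,
      sq_abs] at hpair
    nlinarith [le_abs_self t, apply_nonneg q (star y * x)]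
  have := discrim_le_zero (a := (ν (star y * y)).re) (b := -2 * q (star y * x))
    (c := (ρ (star x * x)).re) fun t => by nlinarith [hq t]
  unfold discrim at this
  nlinarith

lemma norm_apply_le_doubleSystemSeminorm {f : A →L[ℂ] ℂ}
    (hf : ∀ x y : A, ‖f (star y * x)‖ ^ 2 ≤ (ν (star y * y)).re * (ρ (star x * x)).re) (z : A) :
    ‖f z‖ ≤ doubleSystemSeminorm hν hρ z := by
  refine le_csInf (doubleSystemCosts_nonempty z) ?_
  rintro _ ⟨n, y, x, rfl, rfl⟩
  have hpair : ∀ j, ‖f (star (y j) * x j)‖ ≤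
      (1/2) * ((ν (star (y j) * y j)).re + (ρ (star (x j) * x j)).re) := fun j => by
    nlinarith [hf (x j) (y j), hν (y j), hρ (x j), norm_nonneg (f (star (y j) * x j)),
      sq_nonneg ((ν (star (y j) * y j)).re - (ρ (star (x j) * x j)).re)]
  calc ‖f (∑ j, star (y j) * x j)‖ ≤ ∑ j, ‖f (star (y j) * x j)‖ := by
        rw [map_sum]; exact norm_sum_le _ _
    _ ≤ _ := (Finset.sum_le_sum fun j _ => hpair j).trans_eq (Finset.mul_sum ..).symm

lemma doubleSystemSeminorm_le_mul_norm [NormedStarGroup A] (z : A) :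
    doubleSystemSeminorm hν hρ z ≤ √((ν 1).re * ‖ρ‖) * ‖z‖ := by
  have hρz : (ρ (star z * z)).re ≤ ‖ρ‖ * ‖z‖ ^ 2 :=
    calc (ρ (star z * z)).re ≤ ‖ρ‖ * ‖star z * z‖ := (Complex.re_le_norm _).trans (ρ.le_opNorm _)
      _ ≤ ‖ρ‖ * ‖z‖ ^ 2 := by
        gcongr; exact (norm_mul_le _ _).trans_eq (by rw [norm_star, sq])
  have hsq := doubleSystemSeminorm_star_mul_sq_le (hν := hν) (hρ := hρ) 1 z
  rw [star_one, one_mul, one_mul] at hsq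
  rw [← Real.sqrt_sq (apply_nonneg _ z), ← Real.sqrt_sq (norm_nonneg z), ← Real.sqrt_mul']
  · gcongr
    exact hsq.trans (by rw [mul_assoc]; exact mul_le_mul_of_nonneg_left hρz (by simpa using hν 1))
  · positivity

end

end DoubleSystem

lemma IsPosForm.re_nonneg {ν : M →L[ℂ] ℂ} (hν : IsPosForm ν) (x : M) :
    0 ≤ (ν (star x * x)).re :=
  (Complex.le_def.mp (hν x)).1

lemma mem_gammaSet_iff {ν ρ : M →L[ℂ] ℂ} (hν : IsPosForm ν) (hρ : IsPosForm ρ)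
    {f : M →L[ℂ] ℂ} :
    f ∈ GammaSet ν ρ ↔ ∀ z, ‖f z‖ ≤ doubleSystemSeminorm hν.re_nonneg hρ.re_nonneg z :=
  ⟨norm_apply_le_doubleSystemSeminorm, fun hf x y =>
    (pow_le_pow_left₀ (norm_nonneg _) (hf _) 2).trans (doubleSystemSeminorm_star_mul_sq_le y x)⟩

/-- For a von Neumann algebra `M` and positive linear forms `ν, ρ`,
`sup_{f ∈ Γ_M(ν,ρ)} |f 1|` equals the infimum of `(1/2)·Σ_j (ν(y_j*y_j) + ρ(x_j*x_j))`
over all finite double systems with `Σ_j y_j* x_j = 1`. -/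
theorem sup_gamma_one_eq_inf_doubleSystems
    (ν ρ : M →L[ℂ] ℂ) (hν : IsPosForm ν) (hρ : IsPosForm ρ) :
    sSup {r : ℝ | ∃ f ∈ GammaSet ν ρ, r = ‖f 1‖} =
    sInf {r : ℝ | ∃ (n : ℕ) (y x : Fin n → M),
        (∑ j, star (y j) * x j) = 1 ∧
        r = (1/2) * ∑ j, ((ν (star (y j) * y j)).re + (ρ (star (x j) * x j)).re)} := by
  set q := doubleSystemSeminorm hν.re_nonneg hρ.re_nonneg
  have hle : ∀ s ∈ {r : ℝ | ∃ f ∈ GammaSet ν ρ, r = ‖f 1‖}, s ≤ q 1 := by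
    rintro _ ⟨f, hf, rfl⟩
    exact (mem_gammaSet_iff hν hρ).mp hf 1
  obtain ⟨g, hgq, hg1⟩ := q.exists_dual_norm_le_apply_eq 1
  let F := g.mkContinuous _ fun z => (hgq z).trans (doubleSystemSeminorm_le_mul_norm z)
  have hF : F ∈ GammaSet ν ρ := (mem_gammaSet_iff hν hρ).mpr hgq
  have hF1 : ‖F 1‖ = q 1 := by
    simp [F, hg1, abs_of_nonneg (apply_nonneg q 1)]
  -- `q 1` unfolds to the infimum on the right-hand side
  exact le_antisymm (csSup_le ⟨_, F, hF, rfl⟩ hle)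
    (hF1.symm.le.trans (le_csSup ⟨q 1, hle⟩ ⟨F, hF, rfl⟩))
end
end

section
/- Let M be a von Neumann algebra, μ a positive linear form on M, and a, b ∈ M with a*b ≥ 0. Then sup { |f(a*b)| : f ∈ Γ_M(μ, μ) } = μ(a*b), where μ(a*b) is a nonnegative real. -/
open scoped ComplexOrder

noncomputable section

variable {H : Type*} [NormedAddCommGroup H] [InnerProductSpace ℂ H] [CompleteSpace H]

variable {M : VonNeumannAlgebra H}

open ComplexConjugate in
private lemma posForm_hermitian (μ : M →L[ℂ] ℂ) (hμ : IsPosForm μ) (x y : M) :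
    μ (star y * x) = conj (μ (star x * y)) := by
  set u := μ (star x * y) with hu
  set v := μ (star y * x) with hv
  have h1 := hμ (x + y)
  have h2 := hμ (x + Complex.I • y)
  have e1 : μ (star (x + y) * (x + y)) =
      μ (star x * x) + u + v + μ (star y * y) := by
    rw [star_add, add_mul, mul_add, mul_add]
    simp only [map_add, hu, hv]; ring
  have e2 : μ (star (x + Complex.I • y) * (x + Complex.I • y)) =
      μ (star x * x) + Complex.I * u - Complex.I * v + μ (star y * y) := by
    simp only [star_add, star_smul, add_mul, mul_add, smul_mul_assoc, mul_smul_comm,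
      smul_smul, map_add, map_smul, smul_eq_mul, Complex.star_def, Complex.conj_I, hu, hv]
    ring_nf
    rw [Complex.I_sq]
    ring
  have hx0 := hμ x
  have hy0 := hμ y
  rw [Complex.le_def] at h1 h2 hx0 hy0
  rw [e1] at h1; rw [e2] at h2
  simp only [Complex.add_im, Complex.sub_im, Complex.mul_im, Complex.I_re, Complex.I_im,
    Complex.zero_im] at h1 h2 hx0 hy0
  apply Complex.ext
  · simp only [Complex.conj_re]; linarith [h2.2]
  · simp only [Complex.conj_im]; linarith [h1.2]

open ComplexConjugate in
/-- The sesquilinear form of a positive form as a `PreInnerProductSpace.Core`. -/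
private def posForm_core (μ : M →L[ℂ] ℂ) (hμ : IsPosForm μ) :
    PreInnerProductSpace.Core ℂ M where
  inner x y := μ (star x * y)
  conj_inner_symm x y := by
    show conj (μ (star y * x)) = μ (star x * y)
    rw [posForm_hermitian μ hμ y x]
  re_inner_nonneg x := ((Complex.le_def.mp (hμ x)).1 : _)
  add_left x y z := by
    show μ (star (x + y) * z) = μ (star x * z) + μ (star y * z)
    rw [star_add, add_mul, map_add]
  smul_left x y r := by
    show μ (star (r • x) * y) = conj r * μ (star x * y)
    rw [star_smul, smul_mul_assoc, map_smul, smul_eq_mul, Complex.star_def]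

/-- Cauchy–Schwarz for a positive form: `μ` belongs to the Gamma set. -/
private lemma posForm_mem_gammaSet (μ : M →L[ℂ] ℂ) (hμ : IsPosForm μ) :
    μ ∈ GammaSet μ μ := by
  intro x y
  letI c : PreInnerProductSpace.Core ℂ M := posForm_core μ hμ
  letI : Inner ℂ M := c.toInner
  have h := InnerProductSpace.Core.inner_mul_inner_self_le (𝕜 := ℂ) (F := M) y x
  have hsym : ‖(inner ℂ y x : ℂ)‖ = ‖(inner ℂ x y : ℂ)‖ := by
    rw [← c.conj_inner_symm x y, RCLike.norm_conj]
  have hinner : (inner ℂ y x : ℂ) = μ (star y * x) := rfl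
  have hyy : (inner ℂ y y : ℂ) = μ (star y * y) := rfl
  have hxx : (inner ℂ x x : ℂ) = μ (star x * x) := rfl
  calc ‖μ (star y * x)‖ ^ 2 = ‖(inner ℂ y x : ℂ)‖ * ‖(inner ℂ x y : ℂ)‖ := by
        rw [← hsym, hinner, sq]
    _ ≤ RCLike.re (inner ℂ y y : ℂ) * RCLike.re (inner ℂ x x : ℂ) := h
    _ = (μ (star y * y)).re * (μ (star x * x)).re := by rw [hyy, hxx]; rfl

/-- For a von Neumann algebra `M`, a positive linear form `μ` and `a, b ∈ M`
with `a*b ≥ 0`, one has `sup_{f ∈ Γ_M(μ,μ)} |f(a*b)| = μ(a*b)`. -/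
theorem sup_gamma_eval_eq_of_posProd
    (μ : M →L[ℂ] ℂ) (hμ : IsPosForm μ) (a b : M)
    (hab : ∃ w : M, star a * b = star w * w) :
    sSup {r : ℝ | ∃ f ∈ GammaSet μ μ, r = ‖f (star a * b)‖} = (μ (star a * b)).re := by
  obtain ⟨w, hw⟩ := hab
  have hpos : (0 : ℂ) ≤ μ (star a * b) := hw ▸ hμ w
  obtain ⟨hre, him⟩ := Complex.le_def.mp hpos
  simp only [Complex.zero_re, Complex.zero_im] at hre him
  have hnorm : ‖μ (star a * b)‖ = (μ (star a * b)).re := by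
    rw [Complex.norm_def, Complex.normSq_apply, ← him,
      mul_zero, add_zero, Real.sqrt_mul_self hre]
  have hub : ∀ r ∈ {r : ℝ | ∃ f ∈ GammaSet μ μ, r = ‖f (star a * b)‖},
      r ≤ (μ (star a * b)).re := by
    rintro r ⟨f, hf, rfl⟩
    have h := hf w w
    rw [← hw] at h
    have hn : 0 ≤ ‖f (star a * b)‖ := norm_nonneg _
    nlinarith [h, hn, hre]
  refine le_antisymm (csSup_le ⟨‖μ (star a * b)‖, μ, posForm_mem_gammaSet μ hμ, rfl⟩ hub) ?_
  have hmem : (μ (star a * b)).re ∈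
      {r : ℝ | ∃ f ∈ GammaSet μ μ, r = ‖f (star a * b)‖} :=
    ⟨μ, posForm_mem_gammaSet μ hμ, hnorm.symm⟩
  exact le_csSup ⟨(μ (star a * b)).re, hub⟩ hmem
end
end

section
/- Let M be a von Neumann algebra, let ν, ρ be positive linear forms on M, and let z ∈ M. Then the seminorm value τ_{ν,ρ}(z) = inf { (1/2)·Σ_{j=1}^n ( ν(y_j* y_j) + ρ(x_j* x_j) ) : n ∈ ℕ, y_j, x_j ∈ M with Σ_{j=1}^n y_j* x_j = z } agrees with the single-factorization value υ_{ν,ρ}(z) = inf { (1/2)·( ν(y*y) + ρ(x*x) ) : y, x ∈ M with y* x = z }; that is, τ_{ν,ρ}(z) = υ_{ν,ρ}(z). -/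
open scoped ComplexOrder

noncomputable section

variable {H : Type*} [NormedAddCommGroup H] [InnerProductSpace ℂ H] [CompleteSpace H]

variable {M : VonNeumannAlgebra H}

set_option maxHeartbeats 1000000
set_option synthInstance.maxHeartbeats 400000

instance : CompleteSpace M := (VonNeumannAlgebra.instIsClosed M).completeSpace_coe
instance : NormedAlgebra ℂ M := inferInstanceAs (NormedAlgebra ℂ M.toStarSubalgebra)
instance : StarModule ℂ M := inferInstanceAs (StarModule ℂ M.toStarSubalgebra)
instance : CStarRing M := inferInstanceAs (CStarRing M.toStarSubalgebra)
instance : CStarAlgebra M := {}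

lemma sum_star_sq_spec {A : Type*} [CStarAlgebra A] {n : ℕ} (y : Fin n → A) :
    IsSelfAdjoint (∑ j, star (y j) * y j) ∧
      ∀ t ∈ spectrum ℝ (∑ j, star (y j) * y j), 0 ≤ t := by
  rcases subsingleton_or_nontrivial A with hA | hA
  · exact ⟨Subsingleton.elim _ _,
      fun t ht => absurd (isUnit_of_subsingleton _) (spectrum.mem_iff.mp ht)⟩
  classical
  have := Finset.sum_induction (s := Finset.univ) (fun j => star (y j) * y j)
    (fun u => IsSelfAdjoint u ∧ SpectrumRestricts u ContinuousMap.realToNNReal)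
    (fun u v hu hv => ⟨hu.1.add hv.1, hu.2.nnreal_add hu.1 hv.1 hv.2⟩)
    ⟨IsSelfAdjoint.zero A, by
      rw [SpectrumRestricts.nnreal_iff]
      intro t ht
      rw [spectrum.zero_eq] at ht
      simp_all⟩
    (fun j _ => ⟨IsSelfAdjoint.star_mul_self _,
      SpectrumRestricts.nnreal_iff.mpr spectrum_star_mul_self_nonneg⟩)
  exact ⟨this.1, SpectrumRestricts.nnreal_iff.mp this.2⟩

lemma key_construction {A : Type*} [CStarAlgebra A] {n : ℕ} (y x : Fin n → A) (z : A)
    (hz : ∑ j, star (y j) * x j = z) (δ : ℝ) (hδ : 0 < δ) :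
    ∃ Y X : A, star Y * X = z ∧
      star Y * Y = (δ : ℂ) • 1 + ∑ j, star (y j) * y j ∧
      ∃ (d : Fin n → A) (w : A),
        (∑ j, star (x j) * x j) = (∑ j, star (d j) * d j) + star w * w + star X * X := by
  rcases subsingleton_or_nontrivial A with hA | hA
  · exact ⟨1, z, Subsingleton.elim _ _, Subsingleton.elim _ _, x, 0, Subsingleton.elim _ _⟩
  classical
  set a := ∑ j, star (y j) * y j with ha_def
  obtain ⟨ha_sa, ha_spec⟩ := sum_star_sq_spec y
  set e := (δ : ℂ) • (1 : A) with he_def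
  set b := e + a with hb_def
  have he_sa : IsSelfAdjoint e := by
    rw [he_def, IsSelfAdjoint, star_smul, star_one, Complex.star_def, Complex.conj_ofReal]
  have hb_sa : IsSelfAdjoint b := he_sa.add ha_sa
  have he_alg : e = algebraMap ℝ A δ := by
    rw [he_def, Algebra.algebraMap_eq_smul_one, ← algebraMap_smul ℂ δ (1 : A)]
    rfl
  have hbspec : ∀ t ∈ spectrum ℝ b, δ ≤ t := by
    intro t ht
    rw [hb_def, he_alg, ← spectrum.singleton_add_eq] at ht
    obtain ⟨u, hu, v, hv, rfl⟩ := Set.mem_add.mp ht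
    rw [Set.mem_singleton_iff] at hu
    subst hu
    have := ha_spec v hv
    linarith
  have hb_unit : IsUnit b := by
    rw [← spectrum.zero_notMem_iff ℝ]
    intro h0
    linarith [hbspec 0 h0]
  obtain ⟨u, hu⟩ := hb_unit
  set s := cfc Real.sqrt b with hs_def
  have hs_sa : IsSelfAdjoint s := cfc_predicate Real.sqrt b
  have hss : s * s = b := by
    rw [hs_def, ← cfc_mul Real.sqrt Real.sqrt b]
    rw [cfc_congr (g := fun t : ℝ => t)
      (fun t ht => Real.mul_self_sqrt (le_trans hδ.le (hbspec t ht)))]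
    exact cfc_id ℝ b
  set c := ↑u⁻¹ * z with hc_def
  set X := s * c with hX_def
  have hbc : b * c = z := by rw [hc_def, ← mul_assoc, ← hu, Units.mul_inv, one_mul]
  have hstaru : star (↑u⁻¹ : A) = ↑u⁻¹ := by
    have h1 : star (↑u⁻¹ : A) * b = 1 := by
      rw [← hb_sa.star_eq, ← star_mul, ← hu, Units.mul_inv, star_one]
    calc star (↑u⁻¹ : A) = star (↑u⁻¹ : A) * (b * ↑u⁻¹) := by
          rw [← hu, Units.mul_inv, mul_one]
      _ = (star (↑u⁻¹ : A) * b) * ↑u⁻¹ := by rw [mul_assoc]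
      _ = ↑u⁻¹ := by rw [h1, one_mul]
  have hstarc : star c = star z * ↑u⁻¹ := by rw [hc_def, star_mul, hstaru]
  have hstarz : star z = star c * b := by
    rw [← hbc, star_mul, hb_sa.star_eq]
  have hYX : star s * X = z := by
    rw [hs_sa.star_eq, hX_def, ← mul_assoc, hss, hbc]
  have hYY : star s * s = b := by rw [hs_sa.star_eq, hss]
  have hXX : star X * X = star c * (b * c) := by
    rw [hX_def, star_mul, hs_sa.star_eq, mul_assoc, ← mul_assoc s s c, hss, ← mul_assoc]
  set d : Fin n → A := fun j => x j - y j * c with hd_def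
  set w : A := (Real.sqrt δ : ℂ) • c with hw_def
  have hww : star w * w = star c * (e * c) := by
    rw [hw_def, star_smul, smul_mul_smul_comm, Complex.star_def, Complex.conj_ofReal,
      ← Complex.ofReal_mul, Real.mul_self_sqrt hδ.le, he_def, smul_mul_assoc, one_mul,
      mul_smul_comm]
  have hxy : ∑ j, star (x j) * y j = star z := by
    rw [← hz, star_sum]
    exact Finset.sum_congr rfl fun j _ => by rw [star_mul, star_star]
  have hsum : ∑ j, star (d j) * d j
      = (∑ j, star (x j) * x j) - star z * c - star c * z + star c * (a * c) := by
    have step : ∀ j, star (d j) * d j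
        = star (x j) * x j - (star (x j) * y j) * c - star c * (star (y j) * x j)
          + star c * ((star (y j) * y j) * c) := by
      intro j
      simp only [hd_def, star_sub, star_mul, star_star]
      noncomm_ring
    rw [Finset.sum_congr rfl fun j _ => step j]
    simp only [Finset.sum_add_distrib, Finset.sum_sub_distrib, ← Finset.sum_mul,
      ← Finset.mul_sum, hz, hxy, ha_def]
  refine ⟨s, X, hYX, by rw [hYY, hb_def, he_def], d, w, ?_⟩
  rw [hsum, hww, hXX, hstarz, ← hbc, hb_def]
  noncomm_ring


/-- For a von Neumann algebra `M`, positive linear forms `ν, ρ` and `z ∈ M`,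
the seminorm `τ_{ν,ρ}(z)` (infimum over finite double systems with `Σ_j y_j* x_j = z`)
coincides with the single-factorization value `υ_{ν,ρ}(z)`. -/
theorem tau_eq_upsilon
    (ν ρ : M →L[ℂ] ℂ) (hν : IsPosForm ν) (hρ : IsPosForm ρ) (z : M) :
    sInf {r : ℝ | ∃ (n : ℕ) (y x : Fin n → M),
        (∑ j, star (y j) * x j) = z ∧
        r = (1/2) * ∑ j, ((ν (star (y j) * y j)).re + (ρ (star (x j) * x j)).re)} =
    sInf {r : ℝ | ∃ y x : M, star y * x = z ∧
        r = (1/2) * ((ν (star y * y)).re + (ρ (star x * x)).re)} := by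
  have hνre : ∀ q : M, 0 ≤ (ν (star q * q)).re := fun q => by
    simpa using (Complex.le_def.mp (hν q)).1
  have hρre : ∀ q : M, 0 ≤ (ρ (star q * q)).re := fun q => by
    simpa using (Complex.le_def.mp (hρ q)).1
  have hTbdd : BddBelow {r : ℝ | ∃ (n : ℕ) (y x : Fin n → M),
      (∑ j, star (y j) * x j) = z ∧
      r = (1/2) * ∑ j, ((ν (star (y j) * y j)).re + (ρ (star (x j) * x j)).re)} := by
    refine ⟨0, ?_⟩
    rintro r ⟨n, y, x, -, rfl⟩
    have : (0:ℝ) ≤ ∑ j, ((ν (star (y j) * y j)).re + (ρ (star (x j) * x j)).re) :=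
      Finset.sum_nonneg fun j _ => add_nonneg (hνre _) (hρre _)
    linarith
  have hUbdd : BddBelow {r : ℝ | ∃ y x : M, star y * x = z ∧
      r = (1/2) * ((ν (star y * y)).re + (ρ (star x * x)).re)} := by
    refine ⟨0, ?_⟩
    rintro r ⟨y, x, -, rfl⟩
    have := add_nonneg (hνre y) (hρre x)
    linarith
  refine le_antisymm ?_ ?_
  · refine le_csInf ⟨_, 1, z, by rw [star_one, one_mul], rfl⟩ ?_
    rintro r ⟨Y, X, hYX, rfl⟩
    refine csInf_le hTbdd ⟨1, fun _ => Y, fun _ => X, ?_, ?_⟩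
    · simpa using hYX
    · simp
  · refine le_csInf ⟨_, 1, fun _ => (1:M), fun _ => z, by simp, rfl⟩ ?_
    rintro r ⟨n, y, x, hz, rfl⟩
    refine le_of_forall_pos_le_add fun ε hε => ?_
    have hν1 : 0 ≤ (ν 1).re := by simpa using hνre 1
    set δ : ℝ := ε / ((ν 1).re + 1) with hδdef
    have hδpos : 0 < δ := div_pos hε (by linarith)
    obtain ⟨Y, X, hYX, hYY, d, w, hiden⟩ := key_construction y x z hz δ hδpos
    have hmem : (1/2) * ((ν (star Y * Y)).re + (ρ (star X * X)).re) ∈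
        {r : ℝ | ∃ y x : M, star y * x = z ∧
          r = (1/2) * ((ν (star y * y)).re + (ρ (star x * x)).re)} := ⟨Y, X, hYX, rfl⟩
    refine le_trans (csInf_le hUbdd hmem) ?_
    have hνY : (ν (star Y * Y)).re = δ * (ν 1).re + ∑ j, (ν (star (y j) * y j)).re := by
      rw [hYY, map_add, map_smul, map_sum]
      simp only [smul_eq_mul, Complex.add_re, Complex.re_sum, Complex.re_ofReal_mul]
    have hρX : (ρ (star X * X)).re ≤ ∑ j, (ρ (star (x j) * x j)).re := by
      have happ := congrArg (fun q => (ρ q).re) hiden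
      simp only [map_add, map_sum, Complex.add_re, Complex.re_sum] at happ
      have h1 : (0:ℝ) ≤ ∑ j, (ρ (star (d j) * d j)).re :=
        Finset.sum_nonneg fun j _ => hρre _
      have h2 := hρre w
      linarith
    have hδν : δ * (ν 1).re ≤ ε := by
      rw [hδdef, div_mul_eq_mul_div, div_le_iff₀ (by linarith)]
      nlinarith
    rw [hνY, Finset.sum_add_distrib]
    linarith [hρX]
end
end

section
/- Let M be a von Neumann algebra and let ν, ρ be positive linear forms on M. Then Min_M(ν,ρ) is nonempty if and only if there exists a positive invertible a ∈ M with ρ = ν^a, i.e. ρ(y) = ν(a y a) for all y ∈ M. -/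
/-!
If `ρ = ν^a`, then `a` is a minimiser: for positive invertible `z`, positivity of `ν` at
`(1 - a z⁻¹) z (1 - z⁻¹ a) = z - 2a + a z⁻¹ a` is the noncommutative AM–GM inequality
`2 ν(a) ≤ ν(z) + ν(a z⁻¹ a) = ν(z) + ρ(z⁻¹)`, with equality at `z = a`.

Conversely, let `x` be a minimiser. For self-adjoint `h`, the elements `x + t h` stay positive
invertible for small real `t`, so the real part of the derivative `ν(h) - ρ(x⁻¹ h x⁻¹)` at `t = 0`
vanishes, and both values are real because positive forms are hermitian. Self-adjoint elements
span the algebra, hence `ν = ρ(x⁻¹ · x⁻¹)`, which is `ρ = ν^x`.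
-/

open scoped ComplexOrder

noncomputable section

variable {H : Type*} [NormedAddCommGroup H] [InnerProductSpace ℂ H] [CompleteSpace H]

variable {M : VonNeumannAlgebra H}

open Filter Topology

lemma eq_csInf_image_iff_isMinOn {α β : Type*} [ConditionallyCompleteLinearOrder β] {f : α → β}
    {s : Set α} {x : α} (hx : x ∈ s) (hbdd : BddBelow (f '' s)) :
    f x = sInf (f '' s) ↔ IsMinOn f s x :=
  ⟨fun h _ hy ↦ h ▸ csInf_le hbdd ⟨_, hy, rfl⟩, fun h ↦
    (IsLeast.csInf_eq (s := f '' s) ⟨⟨x, hx, rfl⟩, by rintro _ ⟨y, hy, rfl⟩; exact h hy⟩).symm⟩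

lemma ContinuousLinearMap.hasDerivAt_re_comp {E : Type*} [NormedAddCommGroup E] [NormedSpace ℂ E]
    {ν : E →L[ℂ] ℂ} {f : ℝ → E} {f' : E} {t : ℝ} (hf : HasDerivAt f f' t) :
    HasDerivAt (fun s ↦ (ν (f s)).re) (ν f').re t :=
  (Complex.reCLM.comp (ν.restrictScalars ℝ)).hasFDerivAt.comp_hasDerivAt t hf

section Objective

variable {R : Type*} [NormedRing R] [NormedAlgebra ℂ R]

/-- `Ring.inverse` is `0` off the units; the objective only matters on strictly positive, hence
invertible, elements. -/
def minObjective (ν ρ : R →L[ℂ] ℂ) (z : R) : ℝ := 1 / 2 * ((ν z).re + (ρ (Ring.inverse z)).re)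

lemma minObjective_units (ν ρ : R →L[ℂ] ℂ) (z : Rˣ) :
    minObjective ν ρ z = 1 / 2 * ((ν z).re + (ρ ↑z⁻¹).re) := by
  rw [minObjective, Ring.inverse_unit]

lemma hasDerivAt_minObjective_add_smul [CompleteSpace R] (ν ρ : R →L[ℂ] ℂ) (x : Rˣ) (h : R) :
    HasDerivAt (fun t : ℝ ↦ minObjective ν ρ (x + t • h))
      (1 / 2 * ((ν h).re - (ρ (↑x⁻¹ * h * ↑x⁻¹)).re)) 0 := by
  have hline : HasDerivAt (fun t : ℝ ↦ (x : R) + t • h) h 0 := by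
    simpa using ((hasDerivAt_id (0 : ℝ)).smul_const h).const_add (x : R)
  have hinv := (hasFDerivAt_ringInverse (𝕜 := ℝ) x).comp_hasDerivAt_of_eq 0 hline (by simp)
  have := ((ν.hasDerivAt_re_comp hline).add (ρ.hasDerivAt_re_comp hinv)).const_mul (1 / 2)
  simpa [minObjective, sub_eq_add_neg] using this

end Objective

section CStarAlgebra

variable {A : Type*} [CStarAlgebra A] [PartialOrder A] [StarOrderedRing A] {ν ρ : A →L[ℂ] ℂ}

lemma IsStrictlyPositive.isSelfAdjoint_inv {x : Aˣ} (hx : IsStrictlyPositive (x : A)) :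
    IsSelfAdjoint (↑x⁻¹ : A) := by
  simpa using hx.ringInverse.isSelfAdjoint

lemma map_nonneg_of_forall_star_mul_self (hν : ∀ x, 0 ≤ ν (star x * x)) {a : A} (ha : 0 ≤ a) :
    0 ≤ ν a := by
  obtain ⟨w, rfl⟩ := CStarAlgebra.nonneg_iff_eq_star_mul_self.mp ha
  exact hν w

lemma im_map_eq_zero_of_isSelfAdjoint (hν : ∀ x, 0 ≤ ν (star x * x)) {h : A}
    (hh : IsSelfAdjoint h) : (ν h).im = 0 := by
  obtain ⟨b, c, hb, hc, rfl⟩ := hh.exists_nonneg_sub_nonneg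
  rw [map_sub, Complex.sub_im, ← (Complex.le_def.mp (map_nonneg_of_forall_star_mul_self hν hb)).2,
    ← (Complex.le_def.mp (map_nonneg_of_forall_star_mul_self hν hc)).2, Complex.zero_im, sub_zero]

lemma minObjective_nonneg (hν : ∀ x, 0 ≤ ν (star x * x)) (hρ : ∀ x, 0 ≤ ρ (star x * x))
    {z : A} (hz : IsStrictlyPositive z) : 0 ≤ minObjective ν ρ z := by
  have h₁ := Complex.le_def.mp (map_nonneg_of_forall_star_mul_self hν hz.nonneg)
  have h₂ := Complex.le_def.mp (map_nonneg_of_forall_star_mul_self hρ hz.ringInverse.nonneg)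
  simp only [minObjective, Complex.zero_re] at h₁ h₂ ⊢
  linarith [h₁.1, h₂.1]

lemma two_mul_re_map_le (hν : ∀ x, 0 ≤ ν (star x * x)) {z : Aˣ} (hz : IsStrictlyPositive (z : A))
    {a : A} (ha : IsSelfAdjoint a) : 2 * (ν a).re ≤ (ν z).re + (ν (a * ↑z⁻¹ * a)).re := by
  have hsq : star (1 - ↑z⁻¹ * a) * z * (1 - ↑z⁻¹ * a) = (z : A) - a - a + a * ↑z⁻¹ * a := by
    rw [star_sub, star_one, star_mul, ha.star_eq, hz.isSelfAdjoint_inv.star_eq]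
    simp only [sub_mul, mul_sub, one_mul, mul_one, mul_assoc, z.inv_mul, z.mul_inv_cancel_left]
    abel
  have h := map_nonneg_of_forall_star_mul_self hν
    (star_left_conjugate_nonneg hz.nonneg (1 - ↑z⁻¹ * a))
  rw [hsq, map_add, map_sub, map_sub] at h
  simp only [Complex.le_def, Complex.zero_re, Complex.add_re, Complex.sub_re] at h
  linarith [h.1]

lemma isMinOn_minObjective_of_forall_eq (hν : ∀ x, 0 ≤ ν (star x * x))
    {a : A} (ha : IsStrictlyPositive a) (hρ : ∀ y, ρ y = ν (a * y * a)) :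
    IsMinOn (minObjective ν ρ) {z | IsStrictlyPositive z} a := by
  lift a to Aˣ using ha.isUnit
  intro z (hz : IsStrictlyPositive z)
  lift z to Aˣ using hz.isUnit
  have hρa : ρ ↑a⁻¹ = ν a := by rw [hρ, a.mul_inv, one_mul]
  have := two_mul_re_map_le hν hz ha.isSelfAdjoint
  simp only [minObjective, Ring.inverse_unit, hρa, hρ ↑z⁻¹, Set.mem_ofPred_eq]
  linarith

lemma eventually_isStrictlyPositive_add_smul {a h : A} (ha : IsStrictlyPositive a)
    (hh : IsSelfAdjoint h) : ∀ᶠ t : ℝ in 𝓝 0, IsStrictlyPositive (a + t • h) := by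
  nontriviality A
  obtain ⟨r, hr, hra⟩ := (CFC.exists_pos_algebraMap_le_iff ha.isSelfAdjoint).mpr
    fun _ ↦ ha.spectrum_pos
  have hsmall : ∀ᶠ t : ℝ in 𝓝 0, ‖t • h‖ < r := by
    have : Tendsto (fun t : ℝ ↦ t • h) (𝓝 0) (𝓝 0) := by
      simpa using (tendsto_id (x := 𝓝 (0 : ℝ))).smul_const h
    exact this.norm (eventually_lt_nhds (by simpa using hr))
  filter_upwards [hsmall] with t ht
  have hth : IsSelfAdjoint (t • h) := (IsSelfAdjoint.all t).smul hh
  refine (isStrictlyPositive_algebraMap (sub_pos.mpr ht)).of_le ?_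
  calc algebraMap ℝ A (r - ‖t • h‖) = algebraMap ℝ A r + -algebraMap ℝ A ‖t • h‖ := by
        rw [map_sub, sub_eq_add_neg]
    _ ≤ a + t • h := add_le_add hra hth.neg_algebraMap_norm_le_self

lemma re_map_eq_of_isMinOn {x : Aˣ} (hx : IsStrictlyPositive (x : A))
    (hmin : IsMinOn (minObjective ν ρ) {z | IsStrictlyPositive z} x) {h : A}
    (hh : IsSelfAdjoint h) : (ν h).re = (ρ (↑x⁻¹ * h * ↑x⁻¹)).re := by
  have hloc : IsLocalMin (fun t : ℝ ↦ minObjective ν ρ (x + t • h)) 0 := by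
    filter_upwards [eventually_isStrictlyPositive_add_smul hx hh] with t ht
    simpa using hmin ht
  have := hloc.hasDerivAt_eq_zero (hasDerivAt_minObjective_add_smul ν ρ x h)
  linarith

lemma forall_eq_of_isMinOn (hν : ∀ x, 0 ≤ ν (star x * x)) (hρ : ∀ x, 0 ≤ ρ (star x * x))
    {x : Aˣ} (hx : IsStrictlyPositive (x : A))
    (hmin : IsMinOn (minObjective ν ρ) {z | IsStrictlyPositive z} x) :
    ∀ y, ρ y = ν (x * y * x) := by
  have hconj : ν = ρ.comp (ContinuousLinearMap.mulLeftRight ℂ A ↑x⁻¹ ↑x⁻¹) := by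
    refine ContinuousLinearMap.coe_injective <| LinearMap.ext_on span_selfAdjoint fun h hh ↦ ?_
    have hxhx : IsSelfAdjoint (↑x⁻¹ * h * ↑x⁻¹ : A) := by
      simpa [hx.isSelfAdjoint_inv.star_eq] using hh.conjugate (↑x⁻¹ : A)
    apply Complex.ext
    · simpa using re_map_eq_of_isMinOn hx hmin hh
    · simp [im_map_eq_zero_of_isSelfAdjoint hν hh, im_map_eq_zero_of_isSelfAdjoint hρ hxhx]
  intro y
  simp [hconj, mul_assoc]

theorem exists_isMinOn_minObjective_iff (hν : ∀ x, 0 ≤ ν (star x * x))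
    (hρ : ∀ x, 0 ≤ ρ (star x * x)) :
    (∃ x : Aˣ, IsStrictlyPositive (x : A) ∧
      IsMinOn (minObjective ν ρ) {z | IsStrictlyPositive z} x) ↔
    ∃ a : Aˣ, IsStrictlyPositive (a : A) ∧ ∀ y, ρ y = ν (a * y * a) :=
  ⟨fun ⟨x, hx, hmin⟩ ↦ ⟨x, hx, forall_eq_of_isMinOn hν hρ hx hmin⟩,
    fun ⟨a, ha, hρa⟩ ↦ ⟨a, ha, isMinOn_minObjective_of_forall_eq hν ha hρa⟩⟩

end CStarAlgebra

theorem CStarAlgebra.minSet_nonempty_iff {A : Type*} [CStarAlgebra A] (ν ρ : A →L[ℂ] ℂ)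
    (hν : ∀ x : A, 0 ≤ ν (star x * x)) (hρ : ∀ x : A, 0 ≤ ρ (star x * x)) :
    (∃ x : Aˣ, (∃ w : A, (x : A) = star w * w) ∧
      (1/2) * ((ν (x : A)).re + (ρ ((x⁻¹ : Aˣ) : A)).re) =
        sInf {r : ℝ | ∃ z : Aˣ, (∃ w : A, (z : A) = star w * w) ∧
          r = (1/2) * ((ν (z : A)).re + (ρ ((z⁻¹ : Aˣ) : A)).re)}) ↔
    (∃ a : Aˣ, (∃ w : A, (a : A) = star w * w) ∧
      ∀ y : A, ρ y = ν ((a : A) * y * (a : A))) := by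
  -- No order on `A` is assumed; in the spectral order `∃ w, z = star w * w` means `0 ≤ z`.
  let := CStarAlgebra.spectralOrder A
  let := CStarAlgebra.spectralOrderedRing A
  have hpos (z : Aˣ) : (∃ w : A, (z : A) = star w * w) ↔ IsStrictlyPositive (z : A) := by
    rw [IsStrictlyPositive.iff_of_unital, CStarAlgebra.nonneg_iff_eq_star_mul_self]
    simp [z.isUnit]
  have hS : {r : ℝ | ∃ z : Aˣ, (∃ w : A, (z : A) = star w * w) ∧
      r = (1/2) * ((ν (z : A)).re + (ρ ((z⁻¹ : Aˣ) : A)).re)} =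
      minObjective ν ρ '' {z | IsStrictlyPositive z} := by
    ext r
    constructor
    · rintro ⟨z, hz, rfl⟩
      exact ⟨z, (hpos z).mp hz, minObjective_units ν ρ z⟩
    · rintro ⟨z, hz, rfl⟩
      lift z to Aˣ using hz.out.isUnit
      exact ⟨z, (hpos z).mpr hz, minObjective_units ν ρ z⟩
  have hbdd : BddBelow (minObjective ν ρ '' {z | IsStrictlyPositive z}) :=
    ⟨0, by rintro _ ⟨z, hz, rfl⟩; exact minObjective_nonneg hν hρ hz⟩
  simp_rw [hS, hpos, ← minObjective_units, ← exists_isMinOn_minObjective_iff hν hρ]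
  exact exists_congr fun x ↦ and_congr_right fun hx ↦ eq_csInf_image_iff_isMinOn hx hbdd

/-- The set of minimizing elements `Min_M(ν,ρ)` is nonempty if and only if
there exists a positive invertible `a ∈ M` with `ρ = ν^a`, i.e. `ρ(y) = ν(a y a)` for all `y`. -/
theorem minSet_nonempty_iff
    (ν ρ : M →L[ℂ] ℂ) (hν : IsPosForm ν) (hρ : IsPosForm ρ) :
    (∃ x : Mˣ, (∃ w : M, (x : M) = star w * w) ∧
      (1/2) * ((ν (x : M)).re + (ρ ((x⁻¹ : Mˣ) : M)).re) =
        sInf {r : ℝ | ∃ z : Mˣ, (∃ w : M, (z : M) = star w * w) ∧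
          r = (1/2) * ((ν (z : M)).re + (ρ ((z⁻¹ : Mˣ) : M)).re)}) ↔
    (∃ a : Mˣ, (∃ w : M, (a : M) = star w * w) ∧
      ∀ y : M, ρ y = ν ((a : M) * y * (a : M))) :=
  CStarAlgebra.minSet_nonempty_iff ν ρ hν hρ
end
end
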